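/- arXiv:2412.14778 — 2 statements merged into one kernel-verified Lean document; each statement's English description precedes it below -/
import Mathlib

section
/- Let Z be an n×m real random matrix with entries z_il satisfying E(z_il⁴) < ∞, let M̂ = ZᵀZ/n and M = E(M̂). Then the squared spectral norm satisfies E‖M̂ − M‖² ≤ (m²/n²) · sup_{1≤l,k≤m} [ Σ_{i≠j} E(z_il z_ik z_jl z_jk) − (E Σ_{i=1}^n z_il z_ik)² + Σ_{i=1}^n (E z_il⁴)^{1/2} (E z_ik⁴)^{1/2} ]. -/
open MeasureTheory ProbabilityTheory Filter Matrix

noncomputable section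

/-- Spectral (ℓ²-operator) norm of a real matrix. -/
def specNorm {a b : Type*} [Fintype a] [Fintype b] [DecidableEq b]
    (A : Matrix a b ℝ) : ℝ :=
  ‖LinearMap.toContinuousLinearMap (Matrix.toEuclideanLin A)‖

/-- Entrywise expectation of a random matrix. -/
def expMat {Ω : Type*} [MeasureSpace Ω] {a b : Type*}
    (F : Ω → Matrix a b ℝ) : Matrix a b ℝ :=
  Matrix.of fun i j => ∫ ω, F ω i j

section Aux

lemma ennreal_half_eq : (2:ENNReal)⁻¹ = 4⁻¹ + 4⁻¹ := by
  have h := ENNReal.add_halves (2⁻¹ : ENNReal)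
  rw [← h]
  congr 1 <;>
  · rw [div_eq_mul_inv, ← ENNReal.mul_inv (by norm_num) (by norm_num)]
    norm_num

variable {Ω : Type*} [MeasureSpace Ω] [IsProbabilityMeasure (ℙ : MeasureTheory.Measure Ω)]

lemma memL2_mul {f g : Ω → ℝ} (hf : MemLp f 4 ℙ) (hg : MemLp g 4 ℙ) :
    MemLp (fun ω => f ω * g ω) 2 ℙ :=
  by haveI : ENNReal.HolderTriple 4 4 2 := ⟨by simpa using ennreal_half_eq.symm⟩; exact hg.smul hf

lemma integrable_mul2 {f g : Ω → ℝ} (hf : MemLp f 2 ℙ) (hg : MemLp g 2 ℙ) :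
    Integrable (fun ω => f ω * g ω) ℙ :=
  memLp_one_iff_integrable.mp
    (by haveI : ENNReal.HolderTriple 2 2 1 := ⟨by simpa using ENNReal.inv_two_add_inv_two⟩; exact hg.smul hf)

lemma hoelder4 {f g : Ω → ℝ} (hf : MemLp f 4 ℙ) (hg : MemLp g 4 ℙ) :
    ∫ ω, (f ω) ^ 2 * (g ω) ^ 2 ≤
      (∫ ω, (f ω) ^ 4) ^ ((1:ℝ)/2) * (∫ ω, (g ω) ^ 4) ^ ((1:ℝ)/2) := by
  have h2 : Real.HolderConjugate 2 2 := Real.HolderConjugate.two_two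
  have hf2 : MemLp (fun ω => (f ω) ^ 2) (ENNReal.ofReal 2) ℙ := by
    rw [show ENNReal.ofReal 2 = 2 by norm_num]
    simpa only [← pow_two] using memL2_mul hf hf
  have hg2 : MemLp (fun ω => (g ω) ^ 2) (ENNReal.ofReal 2) ℙ := by
    rw [show ENNReal.ofReal 2 = 2 by norm_num]
    simpa only [← pow_two] using memL2_mul hg hg
  have key := integral_mul_le_Lp_mul_Lq_of_nonneg h2
    (Eventually.of_forall fun ω => sq_nonneg (f ω))
    (Eventually.of_forall fun ω => sq_nonneg (g ω)) hf2 hg2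
  have hrw : ∀ x : ℝ, (x ^ 2) ^ (2:ℝ) = x ^ 4 := fun x => by
    rw [show (2:ℝ) = ((2:ℕ):ℝ) by norm_num, Real.rpow_natCast]; ring
  simpa only [hrw] using key

end Aux

lemma specNorm_sq_le {m : ℕ} (A : Matrix (Fin m) (Fin m) ℝ) :
    specNorm A ^ 2 ≤ ∑ l : Fin m, ∑ k : Fin m, (A l k) ^ 2 := by
  set F := ∑ l : Fin m, ∑ k : Fin m, (A l k) ^ 2 with hFdef
  have hF : (0:ℝ) ≤ F :=
    Finset.sum_nonneg fun l _ => Finset.sum_nonneg fun k _ => sq_nonneg _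
  have hb : specNorm A ≤ Real.sqrt F := by
    refine ContinuousLinearMap.opNorm_le_bound _ (Real.sqrt_nonneg _) fun x => ?_
    rw [LinearMap.coe_toContinuousLinearMap']
    have hyl : ∀ l, (Matrix.toEuclideanLin A) x l = ∑ k, A l k * x k := fun l => rfl
    calc ‖(Matrix.toEuclideanLin A) x‖
        = Real.sqrt (∑ l, (∑ k, A l k * x k) ^ 2) := by
          rw [EuclideanSpace.norm_eq]
          congr 1
          refine Finset.sum_congr rfl fun l _ => ?_
          rw [hyl l, Real.norm_eq_abs, sq_abs]
      _ ≤ Real.sqrt (F * ∑ k, (x k) ^ 2) := by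
          refine Real.sqrt_le_sqrt ?_
          calc ∑ l, (∑ k, A l k * x k) ^ 2
              ≤ ∑ l, (∑ k, (A l k) ^ 2) * (∑ k, (x k) ^ 2) :=
                Finset.sum_le_sum fun l _ =>
                  Finset.sum_mul_sq_le_sq_mul_sq Finset.univ (fun k => A l k) (fun k => x k)
            _ = F * ∑ k, (x k) ^ 2 := by rw [hFdef, Finset.sum_mul]
      _ = Real.sqrt F * ‖x‖ := by
          rw [Real.sqrt_mul hF]
          congr 1
          rw [EuclideanSpace.norm_eq]
          congr 1
          exact Finset.sum_congr rfl fun k _ => by rw [Real.norm_eq_abs, sq_abs]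
  calc specNorm A ^ 2 ≤ Real.sqrt F ^ 2 := by
        have h0 : (0:ℝ) ≤ specNorm A := norm_nonneg _
        exact pow_le_pow_left₀ h0 hb 2
    _ = F := Real.sq_sqrt hF

/-- For an `n × m` random matrix `Z` with finite fourth moments,
`M̂ = ZᵀZ/n` and `M = E M̂`, the squared spectral norm satisfies
`E‖M̂ − M‖² ≤ (m²/n²) ⋅ sup_{l,k} [ Σ_{i≠j} E(z_il z_ik z_jl z_jk)
  − (E Σ_i z_il z_ik)² + Σ_i (E z_il⁴)^{1/2} (E z_ik⁴)^{1/2} ]`. -/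
theorem second_moment_bound_Mhat
    {Ω : Type*} [MeasureSpace Ω] [IsProbabilityMeasure (ℙ : Measure Ω)]
    (n m : ℕ) (hn : 0 < n) (hm : 0 < m)
    (Z : Ω → Matrix (Fin n) (Fin m) ℝ)
    (hZmeas : ∀ i l, Measurable fun ω => Z ω i l)
    (hZ4 : ∀ i l, MemLp (fun ω => Z ω i l) 4 ℙ)
    (Mhat : Ω → Matrix (Fin m) (Fin m) ℝ)
    (hMhat : ∀ ω, Mhat ω = (n : ℝ)⁻¹ • ((Z ω)ᵀ * Z ω))
    (M : Matrix (Fin m) (Fin m) ℝ)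
    (hM : M = expMat Mhat) :
    (∫ ω, specNorm (Mhat ω - M) ^ 2) ≤
      ((m : ℝ) ^ 2 / (n : ℝ) ^ 2) *
        ⨆ l : Fin m, ⨆ k : Fin m,
          ((∑ i : Fin n, ∑ j ∈ Finset.univ.erase i,
              ∫ ω, Z ω i l * Z ω i k * Z ω j l * Z ω j k)
            - (∫ ω, ∑ i : Fin n, Z ω i l * Z ω i k) ^ 2
            + ∑ i : Fin n,
                (∫ ω, (Z ω i l) ^ 4) ^ ((1 : ℝ) / 2) *
                  (∫ ω, (Z ω i k) ^ 4) ^ ((1 : ℝ) / 2)) := by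
  classical
  set S : Fin m → Fin m → ℝ := fun l k =>
    ((∑ i : Fin n, ∑ j ∈ Finset.univ.erase i,
        ∫ ω, Z ω i l * Z ω i k * Z ω j l * Z ω j k)
      - (∫ ω, ∑ i : Fin n, Z ω i l * Z ω i k) ^ 2
      + ∑ i : Fin n,
          (∫ ω, (Z ω i l) ^ 4) ^ ((1 : ℝ) / 2) *
            (∫ ω, (Z ω i k) ^ 4) ^ ((1 : ℝ) / 2)) with hSdef
  -- the key per-entry estimate
  have main : ∀ l k : Fin m,
      Integrable (fun ω => (Mhat ω l k - M l k) ^ 2) ℙ ∧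
      (∫ ω, (Mhat ω l k - M l k) ^ 2) ≤ ((n:ℝ) ^ 2)⁻¹ * S l k := by
    intro l k
    set W : Fin n → Ω → ℝ := fun i ω => Z ω i l * Z ω i k with hWdef
    have hW2 : ∀ i, MemLp (W i) 2 ℙ := fun i => memL2_mul (hZ4 i l) (hZ4 i k)
    have hWint : ∀ i, Integrable (W i) ℙ := fun i => (hW2 i).integrable one_le_two
    have hWW : ∀ i j, Integrable (fun ω => W i ω * W j ω) ℙ := fun i j =>
      integrable_mul2 (hW2 i) (hW2 j)
    set T : Ω → ℝ := fun ω => ∑ i, W i ω with hTdef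
    have hTint : Integrable T ℙ := integrable_finset_sum _ fun i _ => hWint i
    have hT2eq : (fun ω => T ω ^ 2) = fun ω => ∑ i, ∑ j, W i ω * W j ω := by
      funext ω
      rw [hTdef]
      simp only
      rw [sq, Finset.sum_mul_sum]
    have hT2int : Integrable (fun ω => T ω ^ 2) ℙ := by
      rw [hT2eq]
      exact integrable_finset_sum _ fun i _ =>
        integrable_finset_sum _ fun j _ => hWW i j
    have hentry : ∀ ω, Mhat ω l k = (n:ℝ)⁻¹ * T ω := by
      intro ω
      rw [hMhat ω]
      simp only [Matrix.smul_apply, Matrix.mul_apply, Matrix.transpose_apply, smul_eq_mul,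
        hTdef, hWdef]
    set c : ℝ := ∫ ω, T ω with hcdef
    have hMlk : M l k = (n:ℝ)⁻¹ * c := by
      rw [hM]
      show (∫ ω, Mhat ω l k) = (n:ℝ)⁻¹ * c
      rw [hcdef, ← integral_const_mul]
      exact integral_congr_ae (Eventually.of_forall fun ω => hentry ω)
    have hdiff : ∀ ω, (Mhat ω l k - M l k) ^ 2 = ((n:ℝ)^2)⁻¹ * (T ω - c) ^ 2 := by
      intro ω
      rw [hentry ω, hMlk, ← mul_sub, mul_pow, inv_pow]
    have hTc2int : Integrable (fun ω => (T ω - c) ^ 2) ℙ := by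
      have : (fun ω => (T ω - c) ^ 2)
          = fun ω => T ω ^ 2 - (2 * c) * T ω + c ^ 2 := by
        funext ω; ring
      rw [this]
      exact ((hT2int.sub (hTint.const_mul (2 * c))).add (integrable_const _))
    have hint : Integrable (fun ω => (Mhat ω l k - M l k) ^ 2) ℙ := by
      have : (fun ω => (Mhat ω l k - M l k) ^ 2)
          = fun ω => ((n:ℝ)^2)⁻¹ * (T ω - c) ^ 2 := funext hdiff
      rw [this]
      exact hTc2int.const_mul _
    refine ⟨hint, ?_⟩
    -- variance identity
    have hsub : Integrable (fun ω => T ω ^ 2 - 2 * c * T ω) ℙ :=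
      hT2int.sub (hTint.const_mul (2 * c))
    have hvar : (∫ ω, (T ω - c) ^ 2) = (∫ ω, T ω ^ 2) - c ^ 2 := by
      have h1 : (fun ω => (T ω - c) ^ 2)
          = fun ω => T ω ^ 2 - 2 * c * T ω + c ^ 2 := by funext ω; ring
      rw [h1, integral_add hsub (integrable_const _),
        integral_sub hT2int (hTint.const_mul (2 * c)), integral_const_mul,
        integral_const]
      simp only [Measure.real, measure_univ, ENNReal.toReal_one, smul_eq_mul, one_mul]
      rw [← hcdef]
      ring
    -- second moment expansion
    have hTT : (∫ ω, T ω ^ 2) = ∑ i, ∑ j, ∫ ω, W i ω * W j ω := by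
      rw [hT2eq, integral_finset_sum _ fun i _ =>
        integrable_finset_sum _ fun j _ => hWW i j]
      exact Finset.sum_congr rfl fun i _ =>
        integral_finset_sum _ fun j _ => hWW i j
    have hsplit : (∑ i, ∑ j, ∫ ω, W i ω * W j ω)
        = (∑ i : Fin n, ∑ j ∈ Finset.univ.erase i, ∫ ω, W i ω * W j ω)
          + ∑ i, ∫ ω, W i ω * W i ω := by
      rw [← Finset.sum_add_distrib]
      exact Finset.sum_congr rfl fun i _ =>
        (Finset.sum_erase_add Finset.univ _ (Finset.mem_univ i)).symm
    have hoff : ∀ i j : Fin n,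
        (∫ ω, W i ω * W j ω) = ∫ ω, Z ω i l * Z ω i k * Z ω j l * Z ω j k := by
      intro i j
      refine integral_congr_ae (Eventually.of_forall fun ω => ?_)
      simp only [hWdef]; ring
    have hdiag : ∀ i : Fin n,
        (∫ ω, W i ω * W i ω) ≤
          (∫ ω, (Z ω i l) ^ 4) ^ ((1:ℝ)/2) * (∫ ω, (Z ω i k) ^ 4) ^ ((1:ℝ)/2) := by
      intro i
      have heq : (∫ ω, W i ω * W i ω) = ∫ ω, (Z ω i l) ^ 2 * (Z ω i k) ^ 2 := by
        refine integral_congr_ae (Eventually.of_forall fun ω => ?_)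
        simp only [hWdef]; ring
      rw [heq]
      exact hoelder4 (hZ4 i l) (hZ4 i k)
    have hceq : c = ∫ ω, ∑ i : Fin n, Z ω i l * Z ω i k := by
      rw [hcdef]
    -- put it together
    have hfinal : (∫ ω, (T ω - c) ^ 2) ≤ S l k := by
      rw [hvar, hTT, hsplit, hSdef]
      simp only
      rw [← hceq]
      have h1 : (∑ i : Fin n, ∑ j ∈ Finset.univ.erase i, ∫ ω, W i ω * W j ω)
          = ∑ i : Fin n, ∑ j ∈ Finset.univ.erase i,
              ∫ ω, Z ω i l * Z ω i k * Z ω j l * Z ω j k :=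
        Finset.sum_congr rfl fun i _ => Finset.sum_congr rfl fun j _ => hoff i j
      rw [h1]
      have h2 : (∑ i, ∫ ω, W i ω * W i ω)
          ≤ ∑ i : Fin n,
              (∫ ω, (Z ω i l) ^ 4) ^ ((1:ℝ)/2) * (∫ ω, (Z ω i k) ^ 4) ^ ((1:ℝ)/2) :=
        Finset.sum_le_sum fun i _ => hdiag i
      linarith
    calc (∫ ω, (Mhat ω l k - M l k) ^ 2)
        = ((n:ℝ)^2)⁻¹ * ∫ ω, (T ω - c) ^ 2 := by
          rw [← integral_const_mul]
          exact integral_congr_ae (Eventually.of_forall fun ω => hdiff ω)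
      _ ≤ ((n:ℝ)^2)⁻¹ * S l k := by
          have hn2 : (0:ℝ) ≤ ((n:ℝ)^2)⁻¹ := by positivity
          exact mul_le_mul_of_nonneg_left hfinal hn2
  -- bound S by the supremum
  set B : ℝ := ⨆ l : Fin m, ⨆ k : Fin m, S l k with hBdef
  have hSB : ∀ l k, S l k ≤ B := by
    intro l k
    have h1 : S l k ≤ ⨆ k', S l k' := le_ciSup (Set.Finite.bddAbove (Set.finite_range _)) k
    have h2 : (⨆ k', S l k') ≤ B :=
      le_ciSup (f := fun l' => ⨆ k', S l' k') (Set.Finite.bddAbove (Set.finite_range _)) l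
    exact h1.trans h2
  -- Frobenius bound and assembly
  have hgInt : Integrable (fun ω => ∑ l : Fin m, ∑ k : Fin m, (Mhat ω l k - M l k) ^ 2) ℙ :=
    integrable_finset_sum _ fun l _ => integrable_finset_sum _ fun k _ => (main l k).1
  have hmono : (∫ ω, specNorm (Mhat ω - M) ^ 2)
      ≤ ∫ ω, ∑ l : Fin m, ∑ k : Fin m, (Mhat ω l k - M l k) ^ 2 := by
    refine integral_mono_of_nonneg (Eventually.of_forall fun ω => sq_nonneg _) hgInt
      (Eventually.of_forall fun ω => ?_)
    have := specNorm_sq_le (Mhat ω - M)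
    simpa [Matrix.sub_apply] using this
  have hsum : (∫ ω, ∑ l : Fin m, ∑ k : Fin m, (Mhat ω l k - M l k) ^ 2)
      = ∑ l : Fin m, ∑ k : Fin m, ∫ ω, (Mhat ω l k - M l k) ^ 2 := by
    rw [integral_finset_sum _ fun l _ =>
      integrable_finset_sum _ fun k _ => (main l k).1]
    exact Finset.sum_congr rfl fun l _ => integral_finset_sum _ fun k _ => (main l k).1
  have hbound : (∑ l : Fin m, ∑ k : Fin m, ∫ ω, (Mhat ω l k - M l k) ^ 2)
      ≤ (m:ℝ) ^ 2 / (n:ℝ) ^ 2 * B := by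
    have hn2 : (0:ℝ) ≤ ((n:ℝ)^2)⁻¹ := by positivity
    calc (∑ l : Fin m, ∑ k : Fin m, ∫ ω, (Mhat ω l k - M l k) ^ 2)
        ≤ ∑ l : Fin m, ∑ k : Fin m, ((n:ℝ)^2)⁻¹ * B :=
          Finset.sum_le_sum fun l _ => Finset.sum_le_sum fun k _ =>
            (main l k).2.trans (mul_le_mul_of_nonneg_left (hSB l k) hn2)
      _ = (m:ℝ) ^ 2 / (n:ℝ) ^ 2 * B := by
          simp [Finset.sum_const, Finset.card_univ]
          ring
  calc (∫ ω, specNorm (Mhat ω - M) ^ 2)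
      ≤ ∑ l : Fin m, ∑ k : Fin m, ∫ ω, (Mhat ω l k - M l k) ^ 2 := hmono.trans_eq hsum
    _ ≤ (m:ℝ) ^ 2 / (n:ℝ) ^ 2 * B := hbound

end
end

section
/- Let Z be an n×m real matrix with ZᵀZ invertible, 𝕏 an n×q real matrix with 𝕏ᵀP_Z𝕏 invertible where P_Z = Z(ZᵀZ)⁻¹Zᵀ, let θ₀ ∈ ℝ^q, u ∈ ℝⁿ, y = 𝕏θ₀ + u, and let θ̂ = (𝕏ᵀP_Z𝕏)⁻¹𝕏ᵀP_Z y be the 2SLS coefficient. Then for any n×r real matrix U, writing M̂ = ZᵀZ/n, N̂ = Zᵀ𝕏/n, Ĵ = ZᵀU/n and 𝓜̂ = I_m − M̂^{-1/2}N̂(N̂ᵀM̂⁻¹N̂)⁻¹N̂ᵀM̂^{-1/2}, one has the exact identity −(2/n) Uᵀ P_Z (y − 𝕏θ̂) = −(2/n) Ĵᵀ M̂^{-1/2} 𝓜̂ M̂^{-1/2} Zᵀ u. -/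
open Matrix

noncomputable section

namespace Matrix.PosSemidef

/-- The positive semidefinite square root, as defined in Mathlib (Dec 2024). -/
def sqrt {n 𝕜 : Type*} [Fintype n] [DecidableEq n] [RCLike 𝕜] [PartialOrder 𝕜] {A : Matrix n n 𝕜}
    (hA : A.PosSemidef) : Matrix n n 𝕜 :=
  (hA.1.eigenvectorUnitary : Matrix n n 𝕜) *
    diagonal (fun i => ((Real.sqrt (hA.1.eigenvalues i) : ℝ) : 𝕜)) *
    (star hA.1.eigenvectorUnitary : Matrix n n 𝕜)

theorem sqrt_mul_self {n : Type*} [Fintype n] [DecidableEq n] {A : Matrix n n ℝ}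
    (hA : A.PosSemidef) : hA.sqrt * hA.sqrt = A := by
  conv_rhs => rw [hA.1.spectral_theorem, Unitary.conjStarAlgAut_apply]
  unfold sqrt
  have hU : (star hA.1.eigenvectorUnitary : Matrix n n ℝ) * (hA.1.eigenvectorUnitary : Matrix n n ℝ)
      = 1 := Unitary.coe_star_mul_self _
  calc (hA.1.eigenvectorUnitary : Matrix n n ℝ) *
        diagonal (fun i => ((Real.sqrt (hA.1.eigenvalues i) : ℝ) : ℝ)) *
        (star hA.1.eigenvectorUnitary : Matrix n n ℝ) *
        ((hA.1.eigenvectorUnitary : Matrix n n ℝ) *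
        diagonal (fun i => ((Real.sqrt (hA.1.eigenvalues i) : ℝ) : ℝ)) *
        (star hA.1.eigenvectorUnitary : Matrix n n ℝ))
      = (hA.1.eigenvectorUnitary : Matrix n n ℝ) *
        (diagonal (fun i => ((Real.sqrt (hA.1.eigenvalues i) : ℝ) : ℝ)) *
        ((star hA.1.eigenvectorUnitary : Matrix n n ℝ) * (hA.1.eigenvectorUnitary : Matrix n n ℝ)) *
        diagonal (fun i => ((Real.sqrt (hA.1.eigenvalues i) : ℝ) : ℝ))) *
        (star hA.1.eigenvectorUnitary : Matrix n n ℝ) := by simp only [Matrix.mul_assoc]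
    _ = _ := by
      rw [hU, Matrix.mul_one, diagonal_mul_diagonal]
      congr 3
      funext i
      simp [Real.mul_self_sqrt (hA.eigenvalues_nonneg i)]

end Matrix.PosSemidef

/-- The exact algebraic residual identity
`−(2/n) Uᵀ P_Z (y − 𝕏θ̂) = −(2/n) Ĵᵀ M̂^{-1/2} 𝓜̂ M̂^{-1/2} Zᵀ u`
for the 2SLS residual, where `y = 𝕏θ₀ + u`, `θ̂` is the 2SLS coefficient,
`M̂ = ZᵀZ/n`, `N̂ = Zᵀ𝕏/n`, `Ĵ = ZᵀU/n` and
`𝓜̂ = I − M̂^{-1/2} N̂ (N̂ᵀM̂⁻¹N̂)⁻¹ N̂ᵀ M̂^{-1/2}`. -/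
theorem twoSLS_residual_identity
    (n m q r : ℕ)
    (Z : Matrix (Fin n) (Fin m) ℝ) (hZZ : IsUnit (Zᵀ * Z).det)
    (XX : Matrix (Fin n) (Fin q) ℝ)
    (PZ : Matrix (Fin n) (Fin n) ℝ) (hPZ : PZ = Z * (Zᵀ * Z)⁻¹ * Zᵀ)
    (hXX : IsUnit (XXᵀ * PZ * XX).det)
    (θ₀ : Fin q → ℝ) (u : Fin n → ℝ) (y : Fin n → ℝ)
    (hy : y = XX.mulVec θ₀ + u)
    (θhat : Fin q → ℝ)
    (hθhat : θhat = (XXᵀ * PZ * XX)⁻¹.mulVec (XXᵀ.mulVec (PZ.mulVec y)))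
    (U : Matrix (Fin n) (Fin r) ℝ)
    (Mhat : Matrix (Fin m) (Fin m) ℝ) (hMhat : Mhat = (n : ℝ)⁻¹ • (Zᵀ * Z))
    (hMpos : Mhat.PosDef)
    (Msq : Matrix (Fin m) (Fin m) ℝ) (hMsq : Msq = hMpos.posSemidef.sqrt)
    (Nhat : Matrix (Fin m) (Fin q) ℝ) (hNhat : Nhat = (n : ℝ)⁻¹ • (Zᵀ * XX))
    (Jhat : Matrix (Fin m) (Fin r) ℝ) (hJhat : Jhat = (n : ℝ)⁻¹ • (Zᵀ * U))
    (𝓜hat : Matrix (Fin m) (Fin m) ℝ)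
    (h𝓜hat : 𝓜hat = 1 - Msq⁻¹ * Nhat * (Nhatᵀ * Mhat⁻¹ * Nhat)⁻¹ * Nhatᵀ * Msq⁻¹) :
    (-(2 / (n : ℝ))) • (Uᵀ.mulVec (PZ.mulVec (y - XX.mulVec θhat))) =
      (-(2 / (n : ℝ))) •
        (Jhatᵀ.mulVec (Msq⁻¹.mulVec (𝓜hat.mulVec (Msq⁻¹.mulVec (Zᵀ.mulVec u))))) := by
  rcases Nat.eq_zero_or_pos n with hn0 | hnpos
  · subst hn0
    have h1 : ∀ (v : Fin 0 → ℝ), Uᵀ.mulVec v = 0 := by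
      intro v; funext i; simp [Matrix.mulVec, dotProduct]
    have h2 : Zᵀ.mulVec u = 0 := by
      funext i; simp [Matrix.mulVec, dotProduct]
    rw [h1, h2]
    simp
  have hn : (n : ℝ) ≠ 0 := Nat.cast_ne_zero.mpr hnpos.ne'
  set A := XXᵀ * PZ * XX with hA
  have hAl : A⁻¹ * A = 1 := nonsing_inv_mul _ hXX
  have hAr : A * A⁻¹ = 1 := mul_nonsing_inv _ hXX
  have hWl : (Zᵀ * Z)⁻¹ * (Zᵀ * Z) = 1 := nonsing_inv_mul _ hZZ
  have hWr : (Zᵀ * Z) * (Zᵀ * Z)⁻¹ = 1 := mul_nonsing_inv _ hZZ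
  have hMdet : IsUnit Mhat.det := isUnit_iff_ne_zero.mpr hMpos.det_pos.ne'
  have hMsqsq : Msq * Msq = Mhat := by rw [hMsq]; exact hMpos.posSemidef.sqrt_mul_self
  have hMsqdet : IsUnit Msq.det := by
    rcases isUnit_iff_ne_zero.mp hMdet with h
    rw [← hMsqsq, det_mul] at h
    exact isUnit_iff_ne_zero.mpr fun h0 => h (by rw [h0]; ring)
  have hSl : Msq⁻¹ * Msq = 1 := nonsing_inv_mul _ hMsqdet
  have hSr : Msq * Msq⁻¹ = 1 := mul_nonsing_inv _ hMsqdet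
  have hMinv : Mhat⁻¹ = Msq⁻¹ * Msq⁻¹ := by rw [← hMsqsq, Matrix.mul_inv_rev]
  have hMinv' : Mhat⁻¹ = (n : ℝ) • (Zᵀ * Z)⁻¹ := by
    apply Matrix.inv_eq_right_inv
    rw [hMhat, smul_mul_assoc, mul_smul_comm, smul_smul, inv_mul_cancel₀ hn, one_smul, hWr]
  have hB : Nhatᵀ * Mhat⁻¹ * Nhat = (n : ℝ)⁻¹ • A := by
    rw [hNhat, hMinv', transpose_smul, transpose_mul, transpose_transpose, hA, hPZ]
    simp only [Matrix.smul_mul, Matrix.mul_smul, smul_smul, Matrix.mul_assoc,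
      inv_mul_cancel₀ hn, mul_inv_cancel₀ hn, one_mul, mul_one]
  have hBinv : (Nhatᵀ * Mhat⁻¹ * Nhat)⁻¹ = (n : ℝ) • A⁻¹ := by
    rw [hB]
    apply Matrix.inv_eq_right_inv
    rw [smul_mul_assoc, mul_smul_comm, smul_smul, inv_mul_cancel₀ hn, one_smul, hAr]
  set R := PZ - PZ * XX * A⁻¹ * XXᵀ * PZ with hR
  -- vector identity
  have hF : PZ.mulVec (y - XX.mulVec θhat) = R.mulVec u := by
    have hRX : R * XX = 0 := by
      rw [hR, Matrix.sub_mul]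
      rw [show PZ * XX * A⁻¹ * XXᵀ * PZ * XX = PZ * XX * (A⁻¹ * A) by
        rw [hA]; simp only [Matrix.mul_assoc]]
      rw [hAl, Matrix.mul_one, sub_self]
    have : PZ.mulVec (y - XX.mulVec θhat) = R.mulVec y := by
      rw [hθhat, Matrix.mulVec_sub]
      simp only [Matrix.mulVec_mulVec]
      rw [hR, Matrix.sub_mulVec]
      simp only [Matrix.mul_assoc, hA]
    rw [this, hy, Matrix.mulVec_add, Matrix.mulVec_mulVec, hRX]
    simp
  congr 1
  rw [hF]
  simp only [Matrix.mulVec_mulVec]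
  -- matrix identity: Uᵀ * R = Jhatᵀ * (Msq⁻¹ * (𝓜hat * (Msq⁻¹ * Zᵀ)))
  have hK : Msq⁻¹ * 𝓜hat * Msq⁻¹ =
      Mhat⁻¹ - Mhat⁻¹ * Nhat * ((n : ℝ) • A⁻¹) * Nhatᵀ * Mhat⁻¹ := by
    rw [h𝓜hat, hBinv, Matrix.mul_sub, Matrix.sub_mul, Matrix.mul_one, hMinv]
    simp only [Matrix.mul_assoc]
  have hE : Uᵀ * R
      = Jhatᵀ * (Msq⁻¹ * 𝓜hat * Msq⁻¹) * Zᵀ := by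
        rw [hK, hMinv', hJhat, hNhat, hR, hPZ]
        simp only [transpose_smul, transpose_mul, transpose_transpose]
        simp only [Matrix.smul_mul, Matrix.mul_smul, Matrix.mul_sub, Matrix.sub_mul, smul_smul,
          smul_sub, Matrix.mul_assoc, inv_mul_cancel₀ hn, mul_inv_cancel₀ hn, one_mul, mul_one,
          one_smul]
  rw [hE]
  simp only [Matrix.mul_assoc]

end
end
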